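/- arXiv:1403.5818 — 2 statements merged into one kernel-verified Lean document; each statement's English description precedes it below -/
import Mathlib

section
/- The matrix S = (1/√3)·((0,1),(-3,0)) satisfies: for every integer matrix v = ((x,y),(z,w)) with x ≡ 0 mod 3 (equivalently, with ⟨v,u⟩ ≡ 0 mod 3 for u = ((1,0),(0,0)) under the form ⟨v,w⟩ = -det(v+w)+det v+det w), the matrix S v Sᵀ = ((w/3, -z),(-y, 3x)) again has integer entries with its (1,1) entry divisible by 3; moreover σ: v ↦ S v Sᵀ is an isometry of this lattice. -/
/-! In coordinates `⟨v, v'⟩ = y z' + y' z - x w' - x' w`, and conjugation by `S` acts as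
`(x, y, z, w) ↦ (w/3, -z, -y, 3x)`: it swaps `y, z` up to sign and rescales `x, w` by
reciprocal factors, so every monomial of the form is preserved. -/

open Matrix

/-- The bilinear form `⟨v,w⟩ = -det(v+w) + det v + det w` on `M₂(ℤ)`. -/
def mform (v w : Matrix (Fin 2) (Fin 2) ℤ) : ℤ := -((v + w).det) + v.det + w.det

lemma mform_of (a b c d a' b' c' d' : ℤ) :
    mform !![a, b; c, d] !![a', b'; c', d'] = b * c' + b' * c - a * d' - a' * d := by
  simp only [mform, of_add_of, vec2_add, det_fin_two_of]
  ring

lemma conj_by_sqrt_three (a b c d : ℝ) :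
    ((√3)⁻¹ • !![0, 1; -3, 0]) * !![a, b; c, d] * ((√3)⁻¹ • !![0, 1; -3, 0])ᵀ =
      !![d / 3, -c; -b, 3 * a] := by
  have hs : √3 * √3 = 3 := Real.mul_self_sqrt (by norm_num)
  have ht : (!![0, 1; -3, 0] : Matrix (Fin 2) (Fin 2) ℝ)ᵀ = !![0, -3; 1, 0] := by
    ext i j; fin_cases i <;> fin_cases j <;> rfl
  rw [transpose_smul, smul_mul, smul_mul_smul_comm, ← mul_inv, hs, ht, mul_fin_two, mul_fin_two,
    smul_of]
  ext i j; fin_cases i <;> fin_cases j <;> simp <;> ring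

/-- For `S = (1/√3)((0,1),(-3,0))` and `v = ((x,y),(z,w)) ∈ M₂(ℤ)` with
`⟨v,u⟩ ≡ 0 mod 3` for `u = ((1,0),(0,0))` (equivalently `3 ∣ w`), the matrix
`S v Sᵀ = ((w/3,-z),(-y,3x))` again has integer entries and lies in the sublattice
`L` (its entry is divisible by 3); moreover `σ : v ↦ S v Sᵀ` is an isometry of
`(L, ⟨·,·⟩)`. -/
theorem sigma_preserves_L_and_isometry
    (x y z w : ℤ) (hw : (3 : ℤ) ∣ w)
    (x' y' z' w' : ℤ) (hw' : (3 : ℤ) ∣ w') :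
    let u : Matrix (Fin 2) (Fin 2) ℤ := !![1, 0; 0, 0]
    let v : Matrix (Fin 2) (Fin 2) ℤ := !![x, y; z, w]
    let v' : Matrix (Fin 2) (Fin 2) ℤ := !![x', y'; z', w']
    let S : Matrix (Fin 2) (Fin 2) ℝ := (Real.sqrt 3)⁻¹ • !![0, 1; -3, 0]
    let σv : Matrix (Fin 2) (Fin 2) ℤ := !![w / 3, -z; -y, 3 * x]
    let σv' : Matrix (Fin 2) (Fin 2) ℤ := !![w' / 3, -z'; -y', 3 * x']
    -- the membership condition `⟨v,u⟩ ≡ 0 mod 3` is equivalent to `3 ∣ w`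
    ((3 : ℤ) ∣ mform v u) ∧
    -- `S v Sᵀ` has integer entries, namely those of `σv`
    (S * v.map (Int.cast : ℤ → ℝ) * Sᵀ = σv.map (Int.cast : ℤ → ℝ)) ∧
    -- `σv` again lies in `L`
    ((3 : ℤ) ∣ mform σv u) ∧
    -- `σ` is an isometry of the lattice `L`
    (mform σv σv' = mform v v') := by
  obtain ⟨k, rfl⟩ := hw
  obtain ⟨k', rfl⟩ := hw'
  intro u v v' S σv σv'
  have hk : 3 * k / 3 = k := by omega
  have hk' : 3 * k' / 3 = k' := by omega
  refine ⟨⟨-k, ?_⟩, ?_, ⟨-x, ?_⟩, ?_⟩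
  · simp only [mform_of, u, v]; ring
  · simp only [S, v, σv, hk, eta_fin_two (Matrix.map _ _), map_apply, of_apply, cons_val',
      cons_val_zero, cons_val_one, empty_val', cons_val_fin_one, conj_by_sqrt_three]
    push_cast
    ring_nf
  · simp only [mform_of, u, σv, hk]; ring
  · simp only [mform_of, σv, σv', v, v', hk, hk']; ring
end

section
/- Appell's hypergeometric series satisfies the factorization F₄(a, b, c, a+b-c+1; x(1-y), y(1-x)) = ₂F₁(a,b,c; x) · ₂F₁(a,b,a+b-c+1; y) for x, y in a neighborhood of 0 (as an identity of formal/convergent power series in x and y). -/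
open scoped Nat

/-- The Pochhammer symbol `(a)_n = a(a+1)⋯(a+n-1)` in `ℂ`. -/
noncomputable def poch (a : ℂ) (n : ℕ) : ℂ := Polynomial.eval a (ascPochhammer ℂ n)

/-- The general term of Appell's hypergeometric series
`F₄(a,b,c₁,c₂;z,w) = Σ (a)_{m+n}(b)_{m+n}/((c₁)_n (c₂)_m n! m!) zⁿ wᵐ`,
indexed by `p = (n, m)`. -/
noncomputable def F4term (a b c₁ c₂ z w : ℂ) (p : ℕ × ℕ) : ℂ :=
  poch a (p.1 + p.2) * poch b (p.1 + p.2) /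
    (poch c₁ p.1 * poch c₂ p.2 * (p.1)! * (p.2)!) * z ^ p.1 * w ^ p.2

/-- The general term of Gauss's hypergeometric series `₂F₁(a,b,c;z)`. -/
noncomputable def F21term (a b c z : ℂ) (n : ℕ) : ℂ :=
  poch a n * poch b n / (poch c n * n !) * z ^ n


lemma poch_zero (a : ℂ) : poch a 0 = 1 := by simp [poch]

lemma poch_succ (a : ℂ) (n : ℕ) : poch a (n+1) = poch a n * (a + n) := by
  simp [poch, ascPochhammer_succ_right]

lemma poch_ne_zero {c : ℂ} (hc : ∀ k : ℕ, c + (k : ℂ) ≠ 0) (n : ℕ) : poch c n ≠ 0 := by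
  induction n with
  | zero => simp [poch_zero]
  | succ k ih => rw [poch_succ]; exact mul_ne_zero ih (hc k)

/-- coefficients of the Appell F4 double series -/
noncomputable def Aco (a b c d : ℂ) (n m : ℕ) : ℂ :=
  poch a (n+m) * poch b (n+m) / (poch c n * poch d m * (n)! * (m)!)

/-- coefficient of `x^r y^s` in `x^n (1-x)^m y^m (1-y)^n` -/
noncomputable def alco (r s n m : ℕ) : ℂ :=
  if n ≤ r ∧ m ≤ s then (-1)^((r-n)+(s-m)) * (n.choose (s-m)) * (m.choose (r-n)) else 0

/-- coefficient of `x^r y^s` in `x^n (1-x)^m y^m (1-y)^(n+1)` -/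
noncomputable def c1co (r s n m : ℕ) : ℂ :=
  if n ≤ r ∧ m ≤ s then (-1)^((r-n)+(s-m)) * (m.choose (r-n)) * ((n+1).choose (s-m)) else 0

/-- coefficient of `x^r y^s` in `x^n (1-x)^m y^(m+1) (1-y)^n` -/
noncomputable def c2co (r s n m : ℕ) : ℂ :=
  if n ≤ r ∧ m+1 ≤ s then (-1)^((r-n)+(s-m-1)) * (m.choose (r-n)) * (n.choose (s-m-1)) else 0

lemma choose_cast_succ_right (m i : ℕ) :
    ((i:ℂ)+1) * (m.choose (i+1)) = ((m:ℂ) - i) * (m.choose i) := by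
  rcases le_or_gt i m with h | h
  · have := Nat.choose_succ_right_eq m i
    have h2 : ((m.choose (i+1) * (i+1) : ℕ) : ℂ) = ((m.choose i * (m - i) : ℕ) : ℂ) := by
      rw [this]
    push_cast [Nat.cast_sub h] at h2
    linear_combination h2
  · rw [Nat.choose_eq_zero_of_lt h, Nat.choose_eq_zero_of_lt (by omega)]
    simp

lemma choose_cast_pred (m i : ℕ) :
    (m:ℂ) * ((m-1).choose i) = ((m:ℂ) - i) * (m.choose i) := by
  rcases m with _ | l
  · rcases i with _ | ii
    · simp
    · simp [Nat.choose_eq_zero_of_lt (by omega : (0:ℕ) < ii+1)]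
  · have h1 : (l+1) * (l.choose i) = (l+1).choose (i+1) * (i+1) := by
      simpa [Nat.succ_eq_add_one] using Nat.add_one_mul_choose_eq l i
    have h2 : ((l+1).choose (i+1)) * (i+1) = (l+1).choose i * ((l+1) - i) := Nat.choose_succ_right_eq (l+1) i
    rcases le_or_gt i (l+1) with h | h
    · have : ((l+1) * (l.choose i) : ℕ) = ((l+1).choose i * ((l+1) - i) : ℕ) := by omega
      have := congrArg (fun t : ℕ => (t : ℂ)) this
      push_cast [Nat.cast_sub h] at this
      rw [show ((l:ℂ)+1) - i = ((l+1:ℕ):ℂ) - i by push_cast; ring] at this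
      push_cast at this ⊢
      linear_combination this
    · rw [Nat.choose_eq_zero_of_lt h, Nat.choose_eq_zero_of_lt (by omega)]
      simp

lemma pascal_cast (n jj : ℕ) :
    (((n+1).choose (jj+1) : ℕ) : ℂ) = (n.choose jj) + (n.choose (jj+1)) := by
  exact_mod_cast congrArg (fun t : ℕ => (t:ℂ)) (Nat.choose_succ_succ n jj)

lemma alco_zero {r s n m : ℕ} (h : ¬(n ≤ r ∧ m ≤ s)) : alco r s n m = 0 := by
  rw [alco, if_neg h]
lemma c1co_zero {r s n m : ℕ} (h : ¬(n ≤ r ∧ m ≤ s)) : c1co r s n m = 0 := by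
  rw [c1co, if_neg h]
lemma c2co_zero {r s n m : ℕ} (h : ¬(n ≤ r ∧ m+1 ≤ s)) : c2co r s n m = 0 := by
  rw [c2co, if_neg h]

lemma dagger (a b c : ℂ) (r s n m : ℕ) :
    ((r:ℂ)+1)*(c+r) * alco (r+1) s n m - (a+r)*(b+r) * alco r s n m
      = (n:ℂ)*(c+n-1) * c1co r s (n-1) m
        + (m:ℂ)*(a+b-c+1+m-1) * c2co r s n (m-1)
        - (a+n+m)*(b+n+m) * (c1co r s n m + c2co r s n m) := by
  by_cases hms : m ≤ s
  · by_cases hnr : n ≤ r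
    · -- main region
      obtain ⟨i, rfl⟩ : ∃ i, r = n + i := ⟨r - n, by omega⟩
      obtain ⟨j, rfl⟩ : ∃ j, s = m + j := ⟨s - m, by omega⟩
      have e1 : alco (n+i+1) (m+j) n m
          = (-1:ℂ)^((i+1)+j) * (n.choose j) * (m.choose (i+1)) := by
        rw [alco, if_pos ⟨by omega, by omega⟩]
        simp only [show n+i+1-n = i+1 by omega, show m+j-m = j by omega]
      have e2 : alco (n+i) (m+j) n m
          = (-1:ℂ)^(i+j) * (n.choose j) * (m.choose i) := by
        rw [alco, if_pos ⟨by omega, by omega⟩]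
        simp only [show n+i-n = i by omega, show m+j-m = j by omega]
      have e3 : c1co (n+i) (m+j) n m
          = (-1:ℂ)^(i+j) * (m.choose i) * ((n+1).choose j) := by
        rw [c1co, if_pos ⟨by omega, by omega⟩]
        simp only [show n+i-n = i by omega, show m+j-m = j by omega]
      have f1 : (n:ℂ)*(c+n-1) * c1co (n+i) (m+j) (n-1) m
          = (n:ℂ)*(c+n-1) * ((-1:ℂ)^((i+1)+j) * (m.choose (i+1)) * (n.choose j)) := by
        rcases n with _ | k
        · simp
        · rw [c1co, if_pos ⟨by omega, by omega⟩]
          simp only [show k+1-1 = k by omega, show k+1+i-k = i+1 by omega,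
            show m+j-m = j by omega]
      have f2 : (m:ℂ)*(a+b-c+1+m-1) * c2co (n+i) (m+j) n (m-1)
          = (m:ℂ)*(a+b-c+m) * ((-1:ℂ)^(i+j) * ((m-1).choose i) * (n.choose j)) := by
        rcases m with _ | l
        · simp
        · rw [c2co, if_pos ⟨by omega, by omega⟩]
          simp only [show l+1-1 = l by omega, show n+i-n = i by omega,
            show l+1+j-(l+1-1)-1 = j by omega, show l+1+j-l-1 = j by omega]
          push_cast
          ring
      rw [e1, e2, e3, f1, f2]
      have h2 := choose_cast_succ_right m i
      have h3 := choose_cast_pred m i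
      rcases j with _ | jj
      · -- j = 0
        have e4 : c2co (n+i) (m+0) n m = 0 := by
          rw [c2co, if_neg (by omega)]
        rw [e4]
        simp only [Nat.choose_zero_right, Nat.cast_one]
        push_cast
        linear_combination (-(-1:ℂ)^(i+0))*(c+2*(n:ℂ)+i)*h2
          + (-(-1:ℂ)^(i+0))*(a+b-c+m)*h3
      · -- j = jj+1
        have e4 : c2co (n+i) (m+(jj+1)) n m
            = (-1:ℂ)^(i+jj) * (m.choose i) * (n.choose jj) := by
          rw [c2co, if_pos ⟨by omega, by omega⟩]
          simp only [show n+i-n = i by omega, show m+(jj+1)-m-1 = jj by omega]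
        rw [e4]
        have h1 := pascal_cast n jj
        push_cast
        linear_combination ((-1:ℂ)^(i+jj))*((n.choose (jj+1):ℂ))*(c+2*(n:ℂ)+i)*h2
          + ((-1:ℂ)^(i+jj))*((n.choose (jj+1):ℂ))*(a+b-c+m)*h3
          + (-(-1:ℂ)^(i+jj))*(a+n+m)*(b+n+m)*((m.choose i:ℂ))*h1
    · -- n > r
      rcases Nat.lt_or_ge (r+1) n with hn2 | hn2
      · -- n > r + 1 : everything vanishes
        rw [alco_zero (by omega), alco_zero (by omega), c1co_zero (by omega),
          c1co_zero (by omega), c2co_zero (by omega), c2co_zero (by omega)]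
        ring
      · -- n = r + 1
        have hn : n = r + 1 := by omega
        subst hn
        rw [alco, if_pos ⟨by omega, by omega⟩, alco_zero (by omega)]
        simp only [show r+1-1 = r by omega]
        rw [c1co, if_pos ⟨by omega, by omega⟩,
          c2co_zero (by omega), c2co_zero (by omega), c1co_zero (by omega)]
        simp only [show r+1-(r+1) = 0 by omega, show r-r = 0 by omega,
          Nat.choose_zero_right, Nat.cast_one]
        push_cast
        ring
  · -- m > s : everything vanishes
    rw [alco_zero (by omega), alco_zero (by omega), c1co_zero (by omega),
      c1co_zero (by omega), c2co_zero (by omega), c2co_zero (by omega)]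
    ring

lemma factorial_cast_ne (n : ℕ) : ((n)! : ℂ) ≠ 0 := by
  exact_mod_cast Nat.cast_ne_zero.mpr (Nat.factorial_ne_zero n)

lemma mydiv_helper (x N D : ℂ) (hx : x ≠ 0) : x * (N / (x * D)) = N / D := by
  rcases eq_or_ne D 0 with h | h
  · simp [h]
  · field_simp

lemma num_helper (A B X Y D : ℂ) : (A*X)*(B*Y)/D = X*Y*(A*B/D) := by
  rw [← mul_div_assoc]
  congr 1
  ring

lemma Aco_rec1 {a b c d : ℂ} (hc : ∀ k : ℕ, c + (k : ℂ) ≠ 0) (n m : ℕ) :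
    ((n:ℂ)+1)*(c+n) * Aco a b c d (n+1) m = (a+n+m)*(b+n+m) * Aco a b c d n m := by
  have hx : ((n:ℂ)+1)*(c+n) ≠ 0 :=
    mul_ne_zero (Nat.cast_add_one_ne_zero n) (hc n)
  rw [Aco, Aco, show n+1+m = (n+m)+1 by omega, poch_succ, poch_succ, poch_succ,
    Nat.factorial_succ]
  push_cast
  rw [show poch c n * (c+↑n) * poch d m * ((↑n+1) * ↑(n)!) * ↑(m)!
      = ((↑n:ℂ)+1)*(c+↑n) * (poch c n * poch d m * ↑(n)! * ↑(m)!) by ring,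
    mydiv_helper _ _ _ hx, num_helper]
  ring

lemma Aco_rec2 {a b c d : ℂ} (hd : ∀ k : ℕ, d + (k : ℂ) ≠ 0) (n m : ℕ) :
    ((m:ℂ)+1)*(d+m) * Aco a b c d n (m+1) = (a+n+m)*(b+n+m) * Aco a b c d n m := by
  have hx : ((m:ℂ)+1)*(d+m) ≠ 0 :=
    mul_ne_zero (Nat.cast_add_one_ne_zero m) (hd m)
  rw [Aco, Aco, show n+(m+1) = (n+m)+1 by omega, poch_succ, poch_succ, poch_succ,
    Nat.factorial_succ]
  push_cast
  rw [show poch c n * (poch d m * (d+↑m)) * ↑(n)! * ((↑m+1) * ↑(m)!)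
      = ((↑m:ℂ)+1)*(d+↑m) * (poch c n * poch d m * ↑(n)! * ↑(m)!) by ring,
    mydiv_helper _ _ _ hx, num_helper]
  ring

noncomputable def Tco (a b c d : ℂ) (r s : ℕ) : ℂ :=
  ∑ n ∈ Finset.range (r+1), ∑ m ∈ Finset.range (s+1), Aco a b c d n m * alco r s n m

lemma Tco_rect (a b c d : ℂ) (r s N M : ℕ) (hN : r+1 ≤ N) (hM : s+1 ≤ M) :
    ∑ n ∈ Finset.range N, ∑ m ∈ Finset.range M, Aco a b c d n m * alco r s n m
      = Tco a b c d r s := by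
  rw [Tco]
  have step1 : ∀ n : ℕ, ∑ m ∈ Finset.range M, Aco a b c d n m * alco r s n m
      = ∑ m ∈ Finset.range (s+1), Aco a b c d n m * alco r s n m := by
    intro n
    refine (Finset.sum_subset (Finset.range_subset_range.mpr hM) ?_).symm
    intro m _ hm
    rw [alco_zero (by simp only [Finset.mem_range] at hm; omega), mul_zero]
  calc ∑ n ∈ Finset.range N, ∑ m ∈ Finset.range M, Aco a b c d n m * alco r s n m
      = ∑ n ∈ Finset.range N, ∑ m ∈ Finset.range (s+1), Aco a b c d n m * alco r s n m :=
        Finset.sum_congr rfl (fun n _ => step1 n)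
    _ = ∑ n ∈ Finset.range (r+1), ∑ m ∈ Finset.range (s+1), Aco a b c d n m * alco r s n m := by
        refine (Finset.sum_subset (Finset.range_subset_range.mpr hN) ?_).symm
        intro n _ hn
        refine Finset.sum_eq_zero fun m _ => ?_
        rw [alco_zero (by simp only [Finset.mem_range] at hn; omega), mul_zero]

noncomputable def PhiF (a b c d : ℂ) (r s n m : ℕ) : ℂ :=
  (n:ℂ)*(c+(n:ℂ)-1) * c1co r s (n-1) m * Aco a b c d n m

noncomputable def PsiF (a b c d : ℂ) (r s n m : ℕ) : ℂ :=
  (m:ℂ)*(d+(m:ℂ)-1) * c2co r s n (m-1) * Aco a b c d n m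

lemma Tco_rec (a b c : ℂ) {d : ℂ} (hd : d = a+b-c+1)
    (hc : ∀ k : ℕ, c + (k : ℂ) ≠ 0) (hd' : ∀ k : ℕ, d + (k : ℂ) ≠ 0) (r s : ℕ) :
    ((r:ℂ)+1)*(c+r) * Tco a b c d (r+1) s = (a+r)*(b+r) * Tco a b c d r s := by
  subst hd
  set d := a+b-c+1 with hd
  set N := r + s + 2 with hN
  have key : ∀ n m : ℕ,
      Aco a b c d n m * (((r:ℂ)+1)*(c+r) * alco (r+1) s n m)
        - Aco a b c d n m * ((a+r)*(b+r) * alco r s n m)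
      = (PhiF a b c d r s n m - PhiF a b c d r s (n+1) m)
        + (PsiF a b c d r s n m - PsiF a b c d r s n (m+1)) := by
    intro n m
    have hΦ : PhiF a b c d r s (n+1) m
        = c1co r s n m * ((a+n+m)*(b+n+m) * Aco a b c d n m) := by
      rw [PhiF, show n+1-1 = n by omega, ← Aco_rec1 hc n m]
      push_cast
      ring
    have hΨ : PsiF a b c d r s n (m+1)
        = c2co r s n m * ((a+n+m)*(b+n+m) * Aco a b c d n m) := by
      rw [PsiF, show m+1-1 = m by omega, ← Aco_rec2 hd' n m]
      push_cast
      ring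
    have hdag := dagger a b c r s n m
    calc Aco a b c d n m * (((r:ℂ)+1)*(c+r) * alco (r+1) s n m)
          - Aco a b c d n m * ((a+r)*(b+r) * alco r s n m)
        = Aco a b c d n m * (((r:ℂ)+1)*(c+r) * alco (r+1) s n m
            - (a+r)*(b+r) * alco r s n m) := by ring
      _ = Aco a b c d n m * ((n:ℂ)*(c+n-1) * c1co r s (n-1) m
            + (m:ℂ)*(a+b-c+1+m-1) * c2co r s n (m-1)
            - (a+n+m)*(b+n+m) * (c1co r s n m + c2co r s n m)) := by rw [hdag]
      _ = (PhiF a b c d r s n m - PhiF a b c d r s (n+1) m)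
            + (PsiF a b c d r s n m - PsiF a b c d r s n (m+1)) := by
          rw [hΦ, hΨ, PhiF, PsiF]
          ring
  have sum1 : ∑ n ∈ Finset.range N, ∑ m ∈ Finset.range N,
      (Aco a b c d n m * (((r:ℂ)+1)*(c+r) * alco (r+1) s n m)
        - Aco a b c d n m * ((a+r)*(b+r) * alco r s n m)) = 0 := by
    have : ∀ n ∈ Finset.range N, ∀ m ∈ Finset.range N,
        (Aco a b c d n m * (((r:ℂ)+1)*(c+r) * alco (r+1) s n m)
          - Aco a b c d n m * ((a+r)*(b+r) * alco r s n m))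
        = (PhiF a b c d r s n m - PhiF a b c d r s (n+1) m)
          + (PsiF a b c d r s n m - PsiF a b c d r s n (m+1)) :=
      fun n _ m _ => key n m
    rw [Finset.sum_congr rfl (fun n hn => Finset.sum_congr rfl (fun m hm => this n hn m hm))]
    have split : ∑ n ∈ Finset.range N, ∑ m ∈ Finset.range N,
        ((PhiF a b c d r s n m - PhiF a b c d r s (n+1) m)
          + (PsiF a b c d r s n m - PsiF a b c d r s n (m+1)))
        = (∑ m ∈ Finset.range N, ∑ n ∈ Finset.range N,
            (PhiF a b c d r s n m - PhiF a b c d r s (n+1) m))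
          + (∑ n ∈ Finset.range N, ∑ m ∈ Finset.range N,
            (PsiF a b c d r s n m - PsiF a b c d r s n (m+1))) := by
      rw [Finset.sum_congr rfl (fun n (_ : n ∈ Finset.range N) =>
        (Finset.sum_add_distrib (s := Finset.range N))), Finset.sum_add_distrib,
        Finset.sum_comm]
    rw [split]
    have hPhi : ∀ m ∈ Finset.range N,
        ∑ n ∈ Finset.range N, (PhiF a b c d r s n m - PhiF a b c d r s (n+1) m)
        = 0 := by
      intro m _
      rw [Finset.sum_range_sub' (fun n => PhiF a b c d r s n m) N]
      have h1 : PhiF a b c d r s 0 m = 0 := by simp [PhiF]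
      have h2 : PhiF a b c d r s N m = 0 := by
        rw [PhiF, c1co_zero (by omega)]
        ring
      rw [h1, h2, sub_zero]
    have hPsi : ∀ n ∈ Finset.range N,
        ∑ m ∈ Finset.range N, (PsiF a b c d r s n m - PsiF a b c d r s n (m+1))
        = 0 := by
      intro n _
      rw [Finset.sum_range_sub' (fun m => PsiF a b c d r s n m) N]
      have h1 : PsiF a b c d r s n 0 = 0 := by simp [PsiF]
      have h2 : PsiF a b c d r s n N = 0 := by
        rw [PsiF, c2co_zero (by omega)]
        ring
      rw [h1, h2, sub_zero]
    rw [Finset.sum_congr rfl hPhi, Finset.sum_congr rfl hPsi]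
    simp
  have expand : ∑ n ∈ Finset.range N, ∑ m ∈ Finset.range N,
      (Aco a b c d n m * (((r:ℂ)+1)*(c+r) * alco (r+1) s n m)
        - Aco a b c d n m * ((a+r)*(b+r) * alco r s n m))
      = ((r:ℂ)+1)*(c+r) * Tco a b c d (r+1) s - (a+r)*(b+r) * Tco a b c d r s := by
    rw [← Tco_rect a b c d (r+1) s N N (by omega) (by omega),
      ← Tco_rect a b c d r s N N (by omega) (by omega)]
    rw [Finset.mul_sum, Finset.mul_sum, ← Finset.sum_sub_distrib]
    refine Finset.sum_congr rfl fun n _ => ?_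
    rw [Finset.mul_sum, Finset.mul_sum, ← Finset.sum_sub_distrib]
    exact Finset.sum_congr rfl fun m _ => by ring
  rw [expand] at sum1
  linear_combination sum1

noncomputable def Bco (a b c : ℂ) (r : ℕ) : ℂ := poch a r * poch b r / (poch c r * (r)!)

lemma Bco_rec {a b c : ℂ} (hc : ∀ k : ℕ, c + (k : ℂ) ≠ 0) (r : ℕ) :
    ((r:ℂ)+1)*(c+r) * Bco a b c (r+1) = (a+r)*(b+r) * Bco a b c r := by
  have hx : ((r:ℂ)+1)*(c+r) ≠ 0 := mul_ne_zero (Nat.cast_add_one_ne_zero r) (hc r)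
  rw [Bco, Bco, poch_succ, poch_succ, poch_succ, Nat.factorial_succ]
  push_cast
  rw [show poch c r * (c+↑r) * ((↑r+1) * ↑(r)!)
      = ((↑r:ℂ)+1)*(c+↑r) * (poch c r * ↑(r)!) by ring,
    mydiv_helper _ _ _ hx, num_helper]

lemma Tco_base (a b c d : ℂ) (s : ℕ) : Tco a b c d 0 s = Bco a b d s := by
  rw [Tco]
  rw [Finset.sum_range_one]
  rw [Finset.sum_eq_single s]
  · rw [alco, if_pos ⟨le_refl 0, le_refl s⟩]
    simp only [Nat.sub_self, Nat.choose_self, Nat.choose_zero_right, Nat.sub_zero]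
    rw [Aco, Bco, poch_zero]
    norm_num [Nat.factorial]
  · intro m hm hne
    have hms : m ≤ s := by simp only [Finset.mem_range] at hm; omega
    rw [alco, if_pos ⟨le_refl 0, hms⟩, Nat.choose_eq_zero_of_lt (by omega : 0 < s - m)]
    simp
  · intro h
    exact absurd (Finset.mem_range.mpr (by omega)) h

lemma Tco_eq (a b c : ℂ) {d : ℂ} (hd : d = a+b-c+1)
    (hc : ∀ k : ℕ, c + (k : ℂ) ≠ 0) (hd' : ∀ k : ℕ, d + (k : ℂ) ≠ 0) (r s : ℕ) :
    Tco a b c d r s = Bco a b c r * Bco a b d s := by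
  induction r with
  | zero =>
    rw [Tco_base, show Bco a b c 0 = 1 from by rw [Bco, poch_zero]; simp [poch_zero]]
    ring
  | succ k ih =>
    have h1 := Tco_rec a b c hd hc hd' k s
    have h2 := Bco_rec (a := a) (b := b) hc k
    have hx : ((k:ℂ)+1)*(c+k) ≠ 0 := mul_ne_zero (Nat.cast_add_one_ne_zero k) (hc k)
    have : ((k:ℂ)+1)*(c+k) * Tco a b c d (k+1) s
        = ((k:ℂ)+1)*(c+k) * (Bco a b c (k+1) * Bco a b d s) := by
      rw [h1, ih]
      linear_combination Bco a b d s * h2.symm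
    exact mul_left_cancel₀ hx this

lemma poch_norm_upper (a : ℂ) (n : ℕ) : ‖poch a n‖ ≤ (1+‖a‖)^n * (n)! := by
  induction n with
  | zero => simp [poch_zero]
  | succ k ih =>
    rw [poch_succ, norm_mul, pow_succ, Nat.factorial_succ]
    have h1 : ‖a + (k:ℂ)‖ ≤ (1+‖a‖)*(k+1) := by
      calc ‖a + (k:ℂ)‖ ≤ ‖a‖ + ‖(k:ℂ)‖ := norm_add_le _ _
        _ = ‖a‖ + k := by rw [Complex.norm_natCast]
        _ ≤ (1+‖a‖)*(k+1) := by nlinarith [norm_nonneg a]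
    calc ‖poch a k‖ * ‖a + (k:ℂ)‖ ≤ ((1+‖a‖)^k * (k)!) * ((1+‖a‖)*(k+1)) := by
          apply mul_le_mul ih h1 (norm_nonneg _)
          positivity
      _ = (1+‖a‖)^k * (1+‖a‖) * ((k+1) * (k)!) := by push_cast; ring
      _ ≤ (1+‖a‖)^k * (1+‖a‖) * ((k+1) * (k)!) := le_refl _
    push_cast
    ring_nf
    exact le_refl _

lemma poch_ne_zero' {c : ℂ} (hc : ∀ k : ℕ, c + (k : ℂ) ≠ 0) (n : ℕ) : poch c n ≠ 0 := by
  induction n with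
  | zero => simp [poch_zero]
  | succ k ih => rw [poch_succ]; exact mul_ne_zero ih (hc k)

lemma poch_norm_lower {c : ℂ} (hc : ∀ k : ℕ, c + (k : ℂ) ≠ 0) :
    ∃ K : ℝ, 0 < K ∧ ∀ n : ℕ, K * (n)! ≤ 4^n * ‖poch c n‖ := by
  set N₀ : ℕ := ⌈2*‖c‖⌉₊ + 1 with hN₀
  have hcN : 2*‖c‖ ≤ N₀ := by
    calc 2*‖c‖ ≤ ⌈2*‖c‖⌉₊ := Nat.le_ceil _
      _ ≤ N₀ := by exact_mod_cast Nat.le_succ _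
  set f : ℕ → ℝ := fun n => 4^n * ‖poch c n‖ / (n)! with hf
  have hne : (Finset.range (N₀+1)).Nonempty := ⟨0, by simp⟩
  set K := (Finset.range (N₀+1)).inf' hne f with hK
  have hKpos : 0 < K := by
    rw [hK, Finset.lt_inf'_iff]
    intro b _
    have h1 : poch c b ≠ 0 := poch_ne_zero' hc b
    have : 0 < ‖poch c b‖ := norm_pos_iff.mpr h1
    positivity
  refine ⟨K, hKpos, ?_⟩
  intro n
  induction n with
  | zero =>
    have h0 : K ≤ f 0 := Finset.inf'_le _ (by simp)
    simpa [hf, poch_zero] using h0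
  | succ k ih =>
    rcases le_or_gt (k+1) N₀ with h | h
    · have h0 : K ≤ f (k+1) := Finset.inf'_le _ (by simp [Finset.mem_range]; omega)
      rw [hf] at h0
      have hfac : (0:ℝ) < ((k+1))! := by positivity
      rw [le_div_iff₀ hfac] at h0
      linarith
    · have hk1 : N₀ ≤ k := by omega
      have hnorm : ((k:ℝ)+1) ≤ 4 * ‖c + (k:ℂ)‖ := by
        have h1 : ‖(k:ℂ)‖ - ‖c‖ ≤ ‖c + k‖ := by
          have h := norm_sub_le (c + (k:ℂ)) c
          simp only [add_sub_cancel_left] at h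
          linarith
        have h2 : ‖(k:ℂ)‖ = (k:ℝ) := Complex.norm_natCast k
        have h3 : ‖c‖ ≤ (k:ℝ)/2 := by
          have : (N₀:ℝ) ≤ k := by exact_mod_cast hk1
          linarith
        have h4 : (1:ℝ) ≤ k := by
          have : (1:ℕ) ≤ k := by omega
          exact_mod_cast this
        linarith
      rw [Nat.factorial_succ]
      push_cast
      calc K * ((k+1) * (k)!) = (K * (k)!) * (k+1) := by ring
        _ ≤ (4^k * ‖poch c k‖) * (k+1) := by
            apply mul_le_mul_of_nonneg_right ih (by positivity)
        _ ≤ (4^k * ‖poch c k‖) * (4 * ‖c + k‖) := by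
            apply mul_le_mul_of_nonneg_left hnorm (by positivity)
        _ = 4^(k+1) * (‖poch c k‖ * ‖c + k‖) := by ring
        _ = 4^(k+1) * ‖poch c (k+1)‖ := by rw [← norm_mul, ← poch_succ]

lemma F4term_eq (a b c₁ c₂ z w : ℂ) (p : ℕ × ℕ) :
    F4term a b c₁ c₂ z w p = Aco a b c₁ c₂ p.1 p.2 * z ^ p.1 * w ^ p.2 := rfl

lemma F21term_eq_Bco (a b c z : ℂ) (n : ℕ) :
    F21term a b c z n = (poch a n * poch b n / (poch c n * (n)!)) * z ^ n := rfl

lemma choose_le_two_pow' (n k : ℕ) : n.choose k ≤ 2^n := by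
  calc n.choose k ≤ ∑ i ∈ Finset.range (n+1), n.choose i := by
        rcases le_or_gt k n with h | h
        · exact Finset.single_le_sum (f := fun i => n.choose i)
            (fun i _ => Nat.zero_le _) (Finset.mem_range.mpr (by omega))
        · rw [Nat.choose_eq_zero_of_lt h]; exact Nat.zero_le _
    _ = 2^n := Nat.sum_range_choose n

lemma F21_norm_bound (a b c x : ℂ) {K : ℝ} (hK : 0 < K)
    (hKc : ∀ n : ℕ, K * (n)! ≤ 4^n * ‖poch c n‖) (n : ℕ) :
    ‖F21term a b c x n‖ ≤ (1/K) * (4^n * ((1+‖a‖)*(1+‖b‖))^n * ‖x‖^n) := by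
  set M := (1+‖a‖)*(1+‖b‖) with hM
  have hMpos : 0 < M := by positivity
  have hfacpos : (0:ℝ) < (n)! := by positivity
  rw [F21term, norm_mul, norm_div, norm_mul, norm_mul, Complex.norm_natCast, norm_pow]
  have hnum : ‖poch a n‖ * ‖poch b n‖ ≤ M^n * ((n)! * (n)!) := by
    calc ‖poch a n‖ * ‖poch b n‖ ≤ ((1+‖a‖)^n * (n)!) * ((1+‖b‖)^n * (n)!) := by
          exact mul_le_mul (poch_norm_upper a n) (poch_norm_upper b n)
            (norm_nonneg _) (by positivity)
      _ = M^n * ((n)! * (n)!) := by rw [hM, mul_pow]; ring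
  have hden : (K * (n)!/4^n) * (n)! ≤ ‖poch c n‖ * (n)! := by
    apply mul_le_mul_of_nonneg_right _ (le_of_lt hfacpos)
    rw [div_le_iff₀ (by positivity : (0:ℝ) < 4^n)]
    calc K * (n)! ≤ 4^n * ‖poch c n‖ := hKc n
      _ = ‖poch c n‖ * 4^n := by ring
  have hq : ‖poch a n‖ * ‖poch b n‖ / (‖poch c n‖ * (n)!)
      ≤ (M^n * ((n)! * (n)!)) / ((K * (n)!/4^n) * (n)!) :=
    div_le_div₀ (by positivity) hnum (by positivity) hden
  have heq : (M^n * ((n)! * (n)!)) / ((K * (n)!/4^n) * (n)!) = (4^n * M^n) / K := by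
    rw [show (K * ((n)!:ℝ)/4^n) * ((n)!:ℝ) = K*(((n)!:ℝ)*((n)!:ℝ))/4^n by ring,
      div_div_eq_mul_div, div_eq_div_iff (by positivity) (by positivity)]
    ring
  calc ‖poch a n‖ * ‖poch b n‖ / (‖poch c n‖ * ↑(n)!) * ‖x‖^n
      ≤ ((4^n * M^n) / K) * ‖x‖^n := by
        rw [← heq]
        exact mul_le_mul_of_nonneg_right hq (by positivity)
    _ = (1/K) * (4^n * M^n * ‖x‖^n) := by ring

lemma Aco_norm_bound (a b c d : ℂ) {K K' : ℝ} (hK : 0 < K) (hK' : 0 < K')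
    (hKc : ∀ n : ℕ, K * (n)! ≤ 4^n * ‖poch c n‖)
    (hKd : ∀ n : ℕ, K' * (n)! ≤ 4^n * ‖poch d n‖) (n m : ℕ) :
    ‖Aco a b c d n m‖ ≤ (1/(K*K'))
      * ((16^n * ((1+‖a‖)*(1+‖b‖))^n) * (16^m * ((1+‖a‖)*(1+‖b‖))^m)) := by
  set M := (1+‖a‖)*(1+‖b‖) with hM
  have hMpos : 0 < M := by positivity
  have hfn : (0:ℝ) < (n)! := by positivity
  have hfm : (0:ℝ) < (m)! := by positivity
  have hfacNat : ((n+m)! : ℝ) ≤ 2^(n+m) * ((n)! * (m)!) := by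
    have hid : (n+m).choose n * ((n)! * (m)!) = (n+m)! := by
      have h := Nat.choose_mul_factorial_mul_factorial (Nat.le_add_right n m)
      simp only [Nat.add_sub_cancel_left] at h
      rw [← h]; ring
    have hch : ((n+m).choose n : ℝ) ≤ 2^(n+m) := by
      exact_mod_cast choose_le_two_pow' (n+m) n
    calc ((n+m)! : ℝ) = ((n+m).choose n : ℝ) * ((n)! * (m)!) := by
          rw [← hid]; push_cast; ring
      _ ≤ 2^(n+m) * ((n)! * (m)!) := by
          exact mul_le_mul_of_nonneg_right hch (by positivity)
  rw [Aco, norm_div, norm_mul, norm_mul, norm_mul, norm_mul,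
    Complex.norm_natCast, Complex.norm_natCast]
  have hnum : ‖poch a (n+m)‖ * ‖poch b (n+m)‖
      ≤ M^(n+m) * ((2^(n+m) * ((n)!*(m)!)) * (2^(n+m) * ((n)!*(m)!))) := by
    calc ‖poch a (n+m)‖ * ‖poch b (n+m)‖
        ≤ ((1+‖a‖)^(n+m) * ((n+m))!) * ((1+‖b‖)^(n+m) * ((n+m))!) :=
          mul_le_mul (poch_norm_upper a (n+m)) (poch_norm_upper b (n+m))
            (norm_nonneg _) (by positivity)
      _ = M^(n+m) * (((n+m))! * ((n+m))!) := by rw [hM, mul_pow]; ring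
      _ ≤ M^(n+m) * ((2^(n+m) * ((n)!*(m)!)) * (2^(n+m) * ((n)!*(m)!))) := by
          apply mul_le_mul_of_nonneg_left _ (by positivity)
          exact mul_le_mul hfacNat hfacNat (by positivity) (by positivity)
  have hden : ((K * (n)!/4^n) * (K' * (m)!/4^m)) * ((n)! * (m)!)
      ≤ ‖poch c n‖ * ‖poch d m‖ * (n)! * (m)! := by
    have h1 : K * (n)!/4^n ≤ ‖poch c n‖ := by
      rw [div_le_iff₀ (by positivity : (0:ℝ) < 4^n)]
      calc K * (n)! ≤ 4^n * ‖poch c n‖ := hKc n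
        _ = ‖poch c n‖ * 4^n := by ring
    have h2 : K' * (m)!/4^m ≤ ‖poch d m‖ := by
      rw [div_le_iff₀ (by positivity : (0:ℝ) < 4^m)]
      calc K' * (m)! ≤ 4^m * ‖poch d m‖ := hKd m
        _ = ‖poch d m‖ * 4^m := by ring
    calc ((K * (n)!/4^n) * (K' * (m)!/4^m)) * ((n)! * (m)!)
        ≤ (‖poch c n‖ * ‖poch d m‖) * ((n)! * (m)!) := by
          apply mul_le_mul_of_nonneg_right _ (by positivity)
          exact mul_le_mul h1 h2 (by positivity) (norm_nonneg _)
      _ = ‖poch c n‖ * ‖poch d m‖ * (n)! * (m)! := by ring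
  have hq := div_le_div₀ (by positivity) hnum (by positivity) hden
  have h2n : (4:ℝ)^n = (2^n)^2 := by
    rw [show (4:ℝ) = 2^2 by norm_num, pow_right_comm]
  have h2m : (4:ℝ)^m = (2^m)^2 := by
    rw [show (4:ℝ) = 2^2 by norm_num, pow_right_comm]
  have h16n : (16:ℝ)^n = (2^n)^4 := by
    rw [show (16:ℝ) = 2^4 by norm_num, pow_right_comm]
  have h16m : (16:ℝ)^m = (2^m)^4 := by
    rw [show (16:ℝ) = 2^4 by norm_num, pow_right_comm]
  have heq : M^(n+m) * ((2^(n+m) * ((n)!*(m)!)) * (2^(n+m) * ((n)!*(m)!)))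
      / ((K * (n)!/4^n) * (K' * (m)!/4^m) * ((n)! * (m)!))
      = (1/(K*K')) * ((16^n * M^n) * (16^m * M^m)) := by
    rw [show (K * ((n)!:ℝ)/4^n) * (K' * ((m)!:ℝ)/4^m) * (((n)!:ℝ) * ((m)!:ℝ))
        = (K*K')*((((n)!:ℝ)*((n)!:ℝ))*(((m)!:ℝ)*((m)!:ℝ)))/(4^n*4^m) by ring,
      div_div_eq_mul_div, pow_add M, pow_add (2:ℝ), h16n, h16m, h2n, h2m,
      show (1/(K*K')) * (((((2:ℝ)^n)^4)*M^n) * ((((2:ℝ)^m)^4)*M^m))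
        = (((((2:ℝ)^n)^4)*M^n) * ((((2:ℝ)^m)^4)*M^m))/(K*K') by ring,
      div_eq_div_iff (by positivity) (by positivity)]
    ring
  exact le_trans hq (le_of_eq heq)

lemma one_sub_pow (y : ℂ) (n : ℕ) :
    (1 - y)^n = ∑ j ∈ Finset.range (n+1), (-1)^j * (n.choose j) * y^j := by
  have h : (1 : ℂ) - y = -y + 1 := by ring
  rw [h, add_pow]
  refine Finset.sum_congr rfl fun j _ => ?_
  rw [neg_pow, one_pow]
  ring

lemma F4term_expand (a b c d x y : ℂ) (n m : ℕ) :
    F4term a b c d (x*(1-y)) (y*(1-x)) (n, m)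
      = ∑ j ∈ Finset.range (n+1), ∑ i ∈ Finset.range (m+1),
          Aco a b c d n m * ((-1)^(j+i) * (n.choose j) * (m.choose i))
            * x^(n+i) * y^(m+j) := by
  rw [F4term_eq]
  simp only
  rw [mul_pow, mul_pow, one_sub_pow y n, one_sub_pow x m]
  rw [show Aco a b c d n m * (x^n * ∑ j ∈ Finset.range (n+1), (-1)^j * (n.choose j) * y^j)
      * (y^m * ∑ i ∈ Finset.range (m+1), (-1)^i * (m.choose i) * x^i)
    = Aco a b c d n m * (x^n * y^m) *
      ∑ j ∈ Finset.range (n+1), ∑ i ∈ Finset.range (m+1),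
        ((-1)^j * (n.choose j) * y^j) * ((-1)^i * (m.choose i) * x^i) from by
      rw [← Finset.sum_mul_sum]; ring]
  rw [Finset.mul_sum]
  refine Finset.sum_congr rfl fun j _ => ?_
  rw [Finset.mul_sum]
  refine Finset.sum_congr rfl fun i _ => ?_
  rw [pow_add, pow_add, pow_add]
  ring

noncomputable def ffun (a b c d x y : ℂ) (q : (ℕ×ℕ)×(ℕ×ℕ)) : ℂ :=
  Aco a b c d q.1.1 q.1.2 * ((-1)^(q.2.1+q.2.2) * ((q.1.1.choose q.2.1 : ℕ) : ℂ)
    * ((q.1.2.choose q.2.2 : ℕ) : ℂ)) * x^(q.1.1+q.2.2) * y^(q.1.2+q.2.1)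

noncomputable def gfun (a b c d x y : ℂ) (q : (ℕ×ℕ)×(ℕ×ℕ)) : ℂ :=
  Aco a b c d q.2.1 q.2.2 * alco q.1.1 q.1.2 q.2.1 q.2.2 * x^q.1.1 * y^q.1.2

lemma gfun_supp {a b c d x y : ℂ} {q : (ℕ×ℕ)×(ℕ×ℕ)} (h : gfun a b c d x y q ≠ 0) :
    q.2.1 ≤ q.1.1 ∧ q.2.2 ≤ q.1.2 := by
  by_contra hcon
  exact h (by rw [gfun, alco_zero hcon]; ring)

lemma hasSum_f_iff_g (a b c d x y : ℂ) (L : ℂ) :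
    HasSum (ffun a b c d x y) L ↔ HasSum (gfun a b c d x y) L := by
  apply hasSum_iff_hasSum_of_ne_zero_bij
    (i := fun q => ((q.1.2.1, q.1.2.2), (q.1.1.2 - q.1.2.2, q.1.1.1 - q.1.2.1)))
  · -- injective
    rintro ⟨⟨⟨r1, s1⟩, ⟨n1, m1⟩⟩, h1⟩ ⟨⟨⟨r2, s2⟩, ⟨n2, m2⟩⟩, h2⟩ heq
    obtain ⟨hn1, hm1⟩ := gfun_supp h1
    obtain ⟨hn2, hm2⟩ := gfun_supp h2
    simp only [Prod.mk.injEq, Subtype.mk.injEq] at heq ⊢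
    simp only at hn1 hm1 hn2 hm2
    obtain ⟨⟨e1, e2⟩, e3, e4⟩ := heq
    subst e1; subst e2
    refine ⟨⟨?_, ?_⟩, rfl, rfl⟩ <;> omega
  · -- support f ⊆ range i
    rintro ⟨⟨n, m⟩, ⟨j, i0⟩⟩ hq
    simp only [Function.mem_support] at hq
    have hg : gfun a b c d x y ((n + i0, m + j), (n, m)) ≠ 0 := by
      rw [gfun]
      simp only
      rw [alco, if_pos ⟨by omega, by omega⟩,
        show n + i0 - n = i0 by omega, show m + j - m = j by omega]
      rw [ffun] at hq
      simp only at hq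
      rw [show j + i0 = i0 + j by omega] at hq
      exact fun h0 => hq (by linear_combination h0)
    exact ⟨⟨((n + i0, m + j), (n, m)), hg⟩, by
      simp only [show m + j - m = j by omega, show n + i0 - n = i0 by omega]⟩
  · -- f (i q) = g q
    rintro ⟨⟨⟨r, s⟩, ⟨n, m⟩⟩, hq⟩
    obtain ⟨hn, hm⟩ := gfun_supp hq
    simp only at hn hm
    simp only [ffun, gfun]
    rw [alco, if_pos ⟨hn, hm⟩]
    rw [show n + (r - n) = r by omega, show m + (s - m) = s by omega,
      show (s - m) + (r - n) = (r - n) + (s - m) by omega]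

-- appended to full.lean
lemma ffun_vanish (a b c d x y : ℂ) (n m j i0 : ℕ) (h : n < j ∨ m < i0) :
    ffun a b c d x y ((n,m),(j,i0)) = 0 := by
  rw [ffun]
  simp only
  rcases h with h | h
  · rw [Nat.choose_eq_zero_of_lt h]
    push_cast
    ring
  · rw [Nat.choose_eq_zero_of_lt h]
    push_cast
    ring

lemma gfun_vanish (a b c d x y : ℂ) (r s n m : ℕ) (h : r < n ∨ s < m) :
    gfun a b c d x y ((r,s),(n,m)) = 0 := by
  rw [gfun]
  simp only
  rw [alco_zero (by omega)]
  ring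

set_option maxHeartbeats 2000000 in
/-- Appell's factorization:
`F₄(a,b,c,a+b-c+1; x(1-y), y(1-x)) = ₂F₁(a,b,c;x) · ₂F₁(a,b,a+b-c+1;y)`
for `x, y` in a neighborhood of `0`. -/
theorem appell_F4_factorization (a b c : ℂ)
    (hc : ∀ k : ℕ, c + (k : ℂ) ≠ 0)
    (hc' : ∀ k : ℕ, a + b - c + 1 + (k : ℂ) ≠ 0) :
    ∃ ε : ℝ, 0 < ε ∧ ∀ x y : ℂ, ‖x‖ < ε → ‖y‖ < ε →
      (∑' p : ℕ × ℕ, F4term a b c (a + b - c + 1) (x * (1 - y)) (y * (1 - x)) p) =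
        (∑' n : ℕ, F21term a b c x n) * (∑' n : ℕ, F21term a b (a + b - c + 1) y n) := by
  obtain ⟨K, hK, hKc⟩ := poch_norm_lower hc
  obtain ⟨K', hK', hKd⟩ := poch_norm_lower hc'
  set d : ℂ := a + b - c + 1 with hd
  set M : ℝ := (1+‖a‖)*(1+‖b‖) with hM
  have hMge : (1:ℝ) ≤ M := by
    rw [hM]; nlinarith [norm_nonneg a, norm_nonneg b]
  have hMpos : (0:ℝ) < M := by linarith
  refine ⟨1/(64*M), by positivity, ?_⟩
  intro x y hx hy
  have h64x : ‖x‖ * (64*M) < 1 := by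
    rw [← lt_div_iff₀ (by positivity)]; exact hx
  have h64y : ‖y‖ * (64*M) < 1 := by
    rw [← lt_div_iff₀ (by positivity)]; exact hy
  have hxlt1 : ‖x‖ < 1 := by nlinarith [norm_nonneg x]
  have hylt1 : ‖y‖ < 1 := by nlinarith [norm_nonneg y]
  have hq1x : 4*M*‖x‖ < 1 := by nlinarith [norm_nonneg x]
  have hq1y : 4*M*‖y‖ < 1 := by nlinarith [norm_nonneg y]
  have hq32x : 32*M*‖x‖ < 1 := by nlinarith [norm_nonneg x]
  have hq32y : 32*M*‖y‖ < 1 := by nlinarith [norm_nonneg y]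
  -- summability of the two Gauss series (in norm)
  have hs21x : Summable (fun n => ‖F21term a b c x n‖) := by
    refine Summable.of_nonneg_of_le (fun n => norm_nonneg _)
      (fun n => F21_norm_bound a b c x hK hKc n) ?_
    refine Summable.congr (((summable_geometric_of_lt_one (by positivity) hq1x).mul_left (1/K))) ?_
    intro n
    rw [show (4*M*‖x‖)^n = 4^n*M^n*‖x‖^n by rw [mul_pow, mul_pow]]
  have hs21y : Summable (fun n => ‖F21term a b d y n‖) := by
    refine Summable.of_nonneg_of_le (fun n => norm_nonneg _)
      (fun n => F21_norm_bound a b d y hK' hKd n) ?_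
    refine Summable.congr (((summable_geometric_of_lt_one (by positivity) hq1y).mul_left (1/K'))) ?_
    intro n
    rw [show (4*M*‖y‖)^n = 4^n*M^n*‖y‖^n by rw [mul_pow, mul_pow]]
  -- summability of the fourfold family
  have hsf : Summable (ffun a b c d x y) := by
    apply Summable.of_norm_bounded
      (g := fun q : (ℕ×ℕ)×(ℕ×ℕ) =>
        ((1/(K*K')) * ((16^q.1.1*2^q.1.1*M^q.1.1*‖x‖^q.1.1)
          * (16^q.1.2*2^q.1.2*M^q.1.2*‖y‖^q.1.2))) * (‖y‖^q.2.1 * ‖x‖^q.2.2))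
    · have SF : Summable (fun p : ℕ×ℕ =>
          (1/(K*K')) * ((16^p.1*2^p.1*M^p.1*‖x‖^p.1) * (16^p.2*2^p.2*M^p.2*‖y‖^p.2))) := by
        refine Summable.congr ((Summable.mul_of_nonneg
          (summable_geometric_of_lt_one (by positivity) hq32x)
          (summable_geometric_of_lt_one (by positivity) hq32y)
          (fun n => by positivity) (fun n => by positivity)).mul_left (1/(K*K'))) ?_
        rintro ⟨n, m⟩
        simp only
        rw [show ((32*M*‖x‖:ℝ))^n = 16^n*2^n*M^n*‖x‖^n by
            rw [show (32:ℝ)*M*‖x‖ = 16*(2*(M*‖x‖)) by ring, mul_pow, mul_pow, mul_pow]; ring,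
          show ((32*M*‖y‖:ℝ))^m = 16^m*2^m*M^m*‖y‖^m by
            rw [show (32:ℝ)*M*‖y‖ = 16*(2*(M*‖y‖)) by ring, mul_pow, mul_pow, mul_pow]; ring]
      have SG : Summable (fun p : ℕ×ℕ => ‖y‖^p.1 * ‖x‖^p.2) :=
        Summable.mul_of_nonneg
          (summable_geometric_of_lt_one (norm_nonneg y) hylt1)
          (summable_geometric_of_lt_one (norm_nonneg x) hxlt1)
          (fun n => by positivity) (fun n => by positivity)
      exact Summable.mul_of_nonneg SF SG
        (fun p => by positivity) (fun p => by positivity)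
    · rintro ⟨⟨n, m⟩, ⟨j, i0⟩⟩
      have hnf : ‖ffun a b c d x y ((n,m),(j,i0))‖
          = ‖Aco a b c d n m‖ * (((n.choose j : ℕ):ℝ) * ((m.choose i0 : ℕ):ℝ))
            * (‖x‖^n * ‖x‖^i0) * (‖y‖^m * ‖y‖^j) := by
        rw [ffun]
        simp only
        rw [norm_mul, norm_mul, norm_mul, norm_mul, norm_mul, norm_pow, norm_neg,
          norm_one, one_pow, Complex.norm_natCast, Complex.norm_natCast,
          norm_pow, norm_pow, pow_add, pow_add]
        ring
      rw [hnf]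
      have hb1 : ((n.choose j : ℕ):ℝ) ≤ 2^n := by
        exact_mod_cast choose_le_two_pow' n j
      have hb2 : ((m.choose i0 : ℕ):ℝ) ≤ 2^m := by
        exact_mod_cast choose_le_two_pow' m i0
      calc ‖Aco a b c d n m‖ * (((n.choose j : ℕ):ℝ) * ((m.choose i0 : ℕ):ℝ))
            * (‖x‖^n * ‖x‖^i0) * (‖y‖^m * ‖y‖^j)
          ≤ ((1/(K*K')) * ((16^n * M^n) * (16^m * M^m))) * ((2:ℝ)^n * (2:ℝ)^m)
            * (‖x‖^n * ‖x‖^i0) * (‖y‖^m * ‖y‖^j) := by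
            gcongr
            exact Aco_norm_bound a b c d hK hK' hKc hKd n m
        _ = ((1/(K*K')) * ((16^n*2^n*M^n*‖x‖^n) * (16^m*2^m*M^m*‖y‖^m)))
            * (‖y‖^j * ‖x‖^i0) := by ring
  have hslicef : ∀ p : ℕ×ℕ, Summable (fun q : ℕ×ℕ => ffun a b c d x y (p, q)) := by
    rintro ⟨n, m⟩
    apply summable_of_ne_finset_zero (s := Finset.range (n+1) ×ˢ Finset.range (m+1))
    rintro ⟨j, i0⟩ hq
    simp only [Finset.mem_product, Finset.mem_range, not_and_or, not_lt] at hq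
    exact ffun_vanish a b c d x y n m j i0 (by omega)
  have hsg : Summable (gfun a b c d x y) := by
    obtain ⟨L, hL⟩ := hsf
    exact ⟨L, (hasSum_f_iff_g a b c d x y L).mp hL⟩
  have hsliceg : ∀ p : ℕ×ℕ, Summable (fun q : ℕ×ℕ => gfun a b c d x y (p, q)) := by
    rintro ⟨r, s⟩
    apply summable_of_ne_finset_zero (s := Finset.range (r+1) ×ˢ Finset.range (s+1))
    rintro ⟨n, m⟩ hq
    simp only [Finset.mem_product, Finset.mem_range, not_and_or, not_lt] at hq
    exact gfun_vanish a b c d x y r s n m (by omega)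
  -- step 1 : expand each F4 term
  have hstep1 : ∀ p : ℕ×ℕ, F4term a b c d (x*(1-y)) (y*(1-x)) p
      = ∑' q : ℕ×ℕ, ffun a b c d x y (p, q) := by
    rintro ⟨n, m⟩
    rw [tsum_eq_sum (s := Finset.range (n+1) ×ˢ Finset.range (m+1)) ?hout]
    case hout =>
      rintro ⟨j, i0⟩ hq
      simp only [Finset.mem_product, Finset.mem_range, not_and_or, not_lt] at hq
      exact ffun_vanish a b c d x y n m j i0 (by omega)
    rw [Finset.sum_product, F4term_expand]
    exact Finset.sum_congr rfl fun j _ => Finset.sum_congr rfl fun i0 _ => rfl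
  -- step 2 : inner sums of g
  have hinner : ∀ p : ℕ×ℕ, (∑' q : ℕ×ℕ, gfun a b c d x y (p, q))
      = F21term a b c x p.1 * F21term a b d y p.2 := by
    rintro ⟨r, s⟩
    rw [tsum_eq_sum (s := Finset.range (r+1) ×ˢ Finset.range (s+1)) ?hout2]
    case hout2 =>
      rintro ⟨n, m⟩ hq
      simp only [Finset.mem_product, Finset.mem_range, not_and_or, not_lt] at hq
      exact gfun_vanish a b c d x y r s n m (by omega)
    rw [Finset.sum_product]
    have e1 : ∑ n ∈ Finset.range (r+1), ∑ m ∈ Finset.range (s+1),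
        gfun a b c d x y ((r,s),(n,m)) = Tco a b c d r s * (x^r * y^s) := by
      rw [Tco, Finset.sum_mul]
      refine Finset.sum_congr rfl fun n _ => ?_
      rw [Finset.sum_mul]
      refine Finset.sum_congr rfl fun m _ => ?_
      rw [gfun]
      simp only
      ring
    rw [e1, Tco_eq a b c hd hc hc' r s]
    rw [show F21term a b c x r = Bco a b c r * x^r from rfl,
      show F21term a b d y s = Bco a b d s * y^s from rfl]
    ring
  -- chain everything
  calc (∑' p : ℕ × ℕ, F4term a b c d (x * (1 - y)) (y * (1 - x)) p)
      = ∑' p : ℕ×ℕ, ∑' q : ℕ×ℕ, ffun a b c d x y (p, q) := tsum_congr hstep1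
    _ = ∑' q : (ℕ×ℕ)×(ℕ×ℕ), ffun a b c d x y q := (Summable.tsum_prod' hsf hslicef).symm
    _ = ∑' q : (ℕ×ℕ)×(ℕ×ℕ), gfun a b c d x y q := by
        obtain ⟨L, hL⟩ := hsf
        rw [hL.tsum_eq, ((hasSum_f_iff_g a b c d x y L).mp hL).tsum_eq]
    _ = ∑' p : ℕ×ℕ, ∑' q : ℕ×ℕ, gfun a b c d x y (p, q) := Summable.tsum_prod' hsg hsliceg
    _ = ∑' p : ℕ×ℕ, F21term a b c x p.1 * F21term a b d y p.2 := tsum_congr hinner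
    _ = (∑' n : ℕ, F21term a b c x n) * (∑' n : ℕ, F21term a b d y n) :=
        (tsum_mul_tsum_of_summable_norm hs21x hs21y).symm
end
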